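/- arXiv:2111.07172 — 4 statements merged into one kernel-verified Lean document; each statement's English description precedes it below -/
import Mathlib

section
/- Let L be a finite-dimensional nilpotent Lie algebra over a field F and let H be a Lie subalgebra of L such that L² = H² + L³ (where L², L³ are terms of the lower central series of L and H² is the derived subalgebra of H). Then Lⁱ = Hⁱ for all i ≥ 2, and moreover H is an ideal of L. -/
/-!
Index lower central series from `0`, so `L₀ = L`, `Lᵢ₊₁ = [L, Lᵢ]`, and similarly `Hᵢ`, viewed
inside `L`. From `L₁ = H₁ + L₂` one gets `[L, Hᵢ] ⊆ Hᵢ₊₁ + Lᵢ₊₂` by induction on `i`: expand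
`[x, [a, b]]` with `a ∈ H`, `b ∈ Hᵢ` by the Jacobi identity, split `[x, a] ∈ H₁ + L₂`, and use
`[L_a, L_b] ⊆ L_{a+b+1}`. Applied to `Lᵢ₊₁ = [L, Lᵢ]` this gives `Lᵢ ⊆ Hᵢ + Lᵢ₊₁` for `i ≥ 1`,
hence `Lᵢ ⊆ Hᵢ + Lᵢ₊ₙ = Hᵢ` once `Lₙ = 0`. In particular `[L, H] ⊆ L₁ = H₁ ⊆ H`.
-/

namespace LieSubmodule

variable {R L M : Type*} [CommRing R] [LieRing L] [LieAlgebra R L]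
  [AddCommGroup M] [Module R M] [LieRingModule L M] [LieModule R L M]

theorem toSubmodule_lie_le_iff {I : LieIdeal R L} {N : LieSubmodule R L M} {T : Submodule R M} :
    (⁅I, N⁆ : LieSubmodule R L M).toSubmodule ≤ T ↔ ∀ x ∈ I, ∀ m ∈ N, ⁅x, m⁆ ∈ T := by
  rw [lieIdeal_oper_eq_linear_span', Submodule.span_le]
  exact ⟨fun h x hx m hm => h ⟨x, hx, m, hm, rfl⟩, fun h _ ⟨x, hx, m, hm, hxm⟩ => hxm ▸ h x hx m hm⟩

theorem lie_lie_le_sup (I J : LieIdeal R L) (N : LieSubmodule R L M) :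
    ⁅⁅I, J⁆, N⁆ ≤ ⁅I, ⁅J, N⁆⁆ ⊔ ⁅J, ⁅I, N⁆⁆ := by
  rw [lie_le_iff]
  intro x hx m hm
  have hx' : x ∈ (⁅I, J⁆ : LieIdeal R L).toSubmodule := hx
  rw [lieIdeal_oper_eq_linear_span'] at hx'
  clear hx
  induction hx' using Submodule.span_induction with
  | mem _ h =>
    obtain ⟨y, hy, z, hz, rfl⟩ := h
    rw [lie_lie]
    exact sub_mem (mem_sup_left (lie_mem_lie hy (lie_mem_lie hz hm)))
      (mem_sup_right (lie_mem_lie hz (lie_mem_lie hy hm)))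
  | zero => simp
  | add _ _ _ _ h₁ h₂ => rw [add_lie]; exact add_mem h₁ h₂
  | smul t _ _ h => rw [smul_lie]; exact SMulMemClass.smul_mem t h

end LieSubmodule

namespace LieModule

variable {R L M : Type*} [CommRing R] [LieRing L] [LieAlgebra R L]
  [AddCommGroup M] [Module R M] [LieRingModule L M]

theorem lie_mem_lowerCentralSeries_succ (x : L) {m : M} {k : ℕ}
    (hm : m ∈ lowerCentralSeries R L M k) : ⁅x, m⁆ ∈ lowerCentralSeries R L M (k + 1) := by
  rw [lowerCentralSeries_succ]
  exact LieSubmodule.lie_mem_lie (LieSubmodule.mem_top x) hm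

variable [LieModule R L M]

theorem lie_lowerCentralSeries_le (a b : ℕ) :
    ⁅lowerCentralSeries R L L a, lowerCentralSeries R L M b⁆ ≤
      lowerCentralSeries R L M (a + b + 1) := by
  induction a generalizing b with
  | zero => rw [zero_add, lowerCentralSeries_succ, lowerCentralSeries_zero]
  | succ a ih =>
    have h₁ : ⁅(⊤ : LieIdeal R L), ⁅lowerCentralSeries R L L a, lowerCentralSeries R L M b⁆⁆ ≤
        lowerCentralSeries R L M (a + 1 + b + 1) := by
      rw [show a + 1 + b + 1 = a + b + 1 + 1 by omega, lowerCentralSeries_succ]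
      exact LieSubmodule.mono_lie_right _ (ih b)
    have h₂ : ⁅lowerCentralSeries R L L a, ⁅(⊤ : LieIdeal R L), lowerCentralSeries R L M b⁆⁆ ≤
        lowerCentralSeries R L M (a + 1 + b + 1) := by
      rw [← lowerCentralSeries_succ, show a + 1 + b + 1 = a + (b + 1) + 1 by omega]
      exact ih (b + 1)
    rw [lowerCentralSeries_succ]
    exact (LieSubmodule.lie_lie_le_sup _ _ _).trans (sup_le h₁ h₂)

end LieModule

namespace LieSubalgebra

variable {R L : Type*} [CommRing R] [LieRing L] [LieAlgebra R L] (H : LieSubalgebra R L)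

/-- `H.lcs i` is the paper's `Hⁱ⁺¹`, viewed as a subspace of `L`. -/
def lcs (i : ℕ) : Submodule R L :=
  (LieModule.lowerCentralSeries R H H i).toSubmodule.map H.incl.toLinearMap

theorem lcs_le (i : ℕ) : H.lcs i ≤ H.toSubmodule := by
  rintro _ ⟨y, -, rfl⟩
  exact y.2

theorem antitone_lcs : Antitone H.lcs := fun _ _ hij =>
  Submodule.map_mono (LieModule.antitone_lowerCentralSeries R H H hij)

theorem lcs_le_lowerCentralSeries (i : ℕ) :
    H.lcs i ≤ (LieModule.lowerCentralSeries R L L i).toSubmodule := by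
  rintro _ ⟨y, hy, rfl⟩
  exact LieIdeal.map_lowerCentralSeries_le i (LieIdeal.mem_map hy)

theorem lcs_succ_le_iff {i : ℕ} {T : Submodule R L} :
    H.lcs (i + 1) ≤ T ↔ ∀ a ∈ H, ∀ b ∈ H.lcs i, ⁅a, b⁆ ∈ T := by
  rw [lcs, Submodule.map_le_iff_le_comap, LieModule.lowerCentralSeries_succ,
    LieSubmodule.toSubmodule_lie_le_iff]
  constructor
  · rintro h a ha _ ⟨b, hb, rfl⟩
    exact h ⟨a, ha⟩ (LieSubmodule.mem_top _) b hb
  · exact fun h a _ b hb => h a a.2 b ⟨b, hb, rfl⟩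

variable {H}

theorem lie_mem_lcs_succ {i : ℕ} {a b : L} (ha : a ∈ H) (hb : b ∈ H.lcs i) :
    ⁅a, b⁆ ∈ H.lcs (i + 1) :=
  (lcs_succ_le_iff H).1 le_rfl a ha b hb

theorem lie_mem_lcs_add {i j : ℕ} {a b : L} (ha : a ∈ H.lcs i) (hb : b ∈ H.lcs j) :
    ⁅a, b⁆ ∈ H.lcs (i + j + 1) := by
  obtain ⟨a, ha, rfl⟩ := ha
  obtain ⟨b, hb, rfl⟩ := hb
  exact ⟨⁅a, b⁆, LieModule.lie_lowerCentralSeries_le i j (LieSubmodule.lie_mem_lie ha hb), rfl⟩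

end LieSubalgebra

theorem le_sup_add_of_le_sup_succ {α : Type*} [SemilatticeSup α] {a b : ℕ → α} (ha : Antitone a)
    {i : ℕ} (h : ∀ j, i ≤ j → b j ≤ a j ⊔ b (j + 1)) (k : ℕ) : b i ≤ a i ⊔ b (i + k) := by
  induction k with
  | zero => exact le_sup_right
  | succ k ih =>
    calc b i ≤ a i ⊔ b (i + k) := ih
      _ ≤ a i ⊔ (a i ⊔ b (i + k + 1)) :=
        sup_le_sup_left ((h _ (by omega)).trans (sup_le_sup_right (ha (by omega)) _)) _
      _ = a i ⊔ b (i + (k + 1)) := by rw [← sup_assoc, sup_idem, add_assoc]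

section

open LieModule LieSubalgebra

variable {K L : Type*} [CommRing K] [LieRing L] [LieAlgebra K L] {H : LieSubalgebra K L}

theorem lie_mem_lcs_succ_sup_of_eq_sup
    (hyp : (lowerCentralSeries K L L 1).toSubmodule =
      H.lcs 1 ⊔ (lowerCentralSeries K L L 2).toSubmodule) (x : L) :
    ∀ i, ∀ b ∈ H.lcs i, ⁅x, b⁆ ∈ H.lcs (i + 1) ⊔ (lowerCentralSeries K L L (i + 2)).toSubmodule
  | 0, b, _ => hyp ▸ lie_mem_lowerCentralSeries_succ x (LieSubmodule.mem_top b)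
  | i + 1, _, hb => by
    refine (H.lcs_succ_le_iff (T := (H.lcs (i + 2) ⊔ _).comap (LieAlgebra.ad K L x))).2
      (fun a ha b hb => ?_) hb
    rw [Submodule.mem_comap, LieAlgebra.ad_apply, leibniz_lie]
    refine add_mem ?_ ?_
    · have hxa : ⁅x, a⁆ ∈ H.lcs 1 ⊔ (lowerCentralSeries K L L 2).toSubmodule :=
        hyp ▸ lie_mem_lowerCentralSeries_succ x (LieSubmodule.mem_top a)
      obtain ⟨u, hu, v, hv, huv⟩ := Submodule.mem_sup.1 hxa
      rw [← huv, add_lie]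
      refine add_mem (Submodule.mem_sup_left ?_) (Submodule.mem_sup_right ?_)
      · exact (by omega : 1 + i + 1 = i + 2) ▸ lie_mem_lcs_add hu hb
      · exact (by omega : 2 + i + 1 = i + 1 + 2) ▸ lie_lowerCentralSeries_le 2 i
          (LieSubmodule.lie_mem_lie hv (H.lcs_le_lowerCentralSeries i hb))
    · obtain ⟨u, hu, v, hv, huv⟩ :=
        Submodule.mem_sup.1 (lie_mem_lcs_succ_sup_of_eq_sup hyp x i b hb)
      rw [← huv, lie_add]
      exact add_mem (Submodule.mem_sup_left (lie_mem_lcs_succ ha hu))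
        (Submodule.mem_sup_right (lie_mem_lowerCentralSeries_succ a hv))

theorem lowerCentralSeries_succ_le_lcs_sup
    (hyp : (lowerCentralSeries K L L 1).toSubmodule =
      H.lcs 1 ⊔ (lowerCentralSeries K L L 2).toSubmodule) :
    ∀ i, (lowerCentralSeries K L L (i + 1)).toSubmodule ≤
      H.lcs (i + 1) ⊔ (lowerCentralSeries K L L (i + 2)).toSubmodule
  | 0 => hyp.le
  | i + 1 => by
    rw [lowerCentralSeries_succ K L L (i + 1), LieSubmodule.toSubmodule_lie_le_iff]
    rintro x - y hy
    obtain ⟨u, hu, v, hv, rfl⟩ := Submodule.mem_sup.1 (lowerCentralSeries_succ_le_lcs_sup hyp i hy)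
    rw [lie_add]
    exact add_mem (lie_mem_lcs_succ_sup_of_eq_sup hyp x _ u hu)
      (Submodule.mem_sup_right (lie_mem_lowerCentralSeries_succ x hv))

theorem lowerCentralSeries_succ_eq_lcs [LieRing.IsNilpotent L]
    (hyp : (lowerCentralSeries K L L 1).toSubmodule =
      H.lcs 1 ⊔ (lowerCentralSeries K L L 2).toSubmodule) (i : ℕ) :
    (lowerCentralSeries K L L (i + 1)).toSubmodule = H.lcs (i + 1) := by
  obtain ⟨n, hn⟩ := IsNilpotent.nilpotent K L L
  have hvanish : lowerCentralSeries K L L (i + 1 + n) = ⊥ :=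
    eq_bot_mono (antitone_lowerCentralSeries K L L (by omega)) hn
  refine le_antisymm ?_ (H.lcs_le_lowerCentralSeries _)
  have hchain := le_sup_add_of_le_sup_succ (b := fun j => (lowerCentralSeries K L L j).toSubmodule)
    H.antitone_lcs (i := i + 1) (fun j hj => ?_) n
  · simpa [hvanish] using hchain
  · obtain ⟨j, rfl⟩ := Nat.exists_eq_succ_of_ne_zero (by omega : j ≠ 0)
    exact lowerCentralSeries_succ_le_lcs_sup hyp j

end

theorem stmt_0_general (K : Type*) [Field K] (L : Type*) [LieRing L] [LieAlgebra K L]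
    [LieRing.IsNilpotent L]
    (H : LieSubalgebra K L)
    (hyp : (LieModule.lowerCentralSeries K L L 1).toSubmodule =
      Submodule.map H.incl.toLinearMap
        (LieModule.lowerCentralSeries K H H 1).toSubmodule ⊔
      (LieModule.lowerCentralSeries K L L 2).toSubmodule) :
    (∀ i : ℕ, 1 ≤ i →
      (LieModule.lowerCentralSeries K L L i).toSubmodule =
        Submodule.map H.incl.toLinearMap
          (LieModule.lowerCentralSeries K H H i).toSubmodule) ∧
    (∀ x : L, ∀ y ∈ H, ⁅x, y⁆ ∈ H) := by
  have hseries : ∀ i, (LieModule.lowerCentralSeries K L L (i + 1)).toSubmodule = H.lcs (i + 1) :=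
    lowerCentralSeries_succ_eq_lcs hyp
  refine ⟨fun i hi => ?_, fun x y _ => ?_⟩
  · obtain ⟨i, rfl⟩ := Nat.exists_eq_add_of_le' hi
    exact hseries i
  · have hxy : ⁅x, y⁆ ∈ H.lcs 1 :=
      hseries 0 ▸ LieModule.lie_mem_lowerCentralSeries_succ x (LieSubmodule.mem_top y)
    exact H.lcs_le 1 hxy

/-- If `L` is a finite-dimensional nilpotent Lie algebra and `H` a subalgebra
with `L² = H² + L³`, then `Lⁱ = Hⁱ` for all `i ≥ 2` and `H` is an ideal of `L`.
(Here the paper's `Lⁱ` is `LieModule.lowerCentralSeries K L L (i-1)`.) -/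
theorem stmt_0 (K : Type*) [Field K] (L : Type*) [LieRing L] [LieAlgebra K L]
    [FiniteDimensional K L] [LieRing.IsNilpotent L]
    (H : LieSubalgebra K L)
    (hyp : (LieModule.lowerCentralSeries K L L 1).toSubmodule =
      Submodule.map H.incl.toLinearMap
        (LieModule.lowerCentralSeries K H H 1).toSubmodule ⊔
      (LieModule.lowerCentralSeries K L L 2).toSubmodule) :
    (∀ i : ℕ, 1 ≤ i →
      (LieModule.lowerCentralSeries K L L i).toSubmodule =
        Submodule.map H.incl.toLinearMap
          (LieModule.lowerCentralSeries K H H i).toSubmodule) ∧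
    (∀ x : L, ∀ y ∈ H, ⁅x, y⁆ ∈ H) :=
  stmt_0_general K L H hyp
end

section
/- In the tensor square L ⊗ L of a Lie algebra L, the submodule L □ L generated by the elements l ⊗ l for all l ∈ L lies in the center of L ⊗ L. -/
/-- in the nonabelian tensor square `L ⊗ L` of a Lie algebra `L`
(formalized here as any Lie algebra `T` generated by elements `t x y` satisfying the
defining relations of the nonabelian tensor product), the subalgebra `L □ L`
generated by the elements `l ⊗ l` lies in the centre of `L ⊗ L`. -/
theorem stmt_2 (K : Type*) [Field K] (L T : Type*) [LieRing L] [LieAlgebra K L]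
    [LieRing T] [LieAlgebra K T]
    (t : L → L → T)
    (hgen : LieSubalgebra.lieSpan K T (Set.range fun p : L × L => t p.1 p.2) = ⊤)
    (hadd_left : ∀ x x' y : L, t (x + x') y = t x y + t x' y)
    (hadd_right : ∀ x y y' : L, t x (y + y') = t x y + t x y')
    (hsmul_left : ∀ (a : K) (x y : L), t (a • x) y = a • t x y)
    (hsmul_right : ∀ (a : K) (x y : L), t x (a • y) = a • t x y)
    (hrel_left : ∀ x x' y : L, t ⁅x, x'⁆ y = t x ⁅x', y⁆ - t x' ⁅x, y⁆)
    (hrel_right : ∀ x y y' : L, t x ⁅y, y'⁆ = t ⁅y', x⁆ y - t ⁅y, x⁆ y')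
    (hrel_brkt : ∀ x y x' y' : L, ⁅t x y, t x' y'⁆ = - t ⁅y, x⁆ ⁅x', y'⁆) :
    ∀ z ∈ LieSubalgebra.lieSpan K T {w | ∃ l : L, w = t l l},
      z ∈ LieAlgebra.center K T := by
  -- t 0 y = 0
  have ht0 : ∀ y : L, t 0 y = 0 := by
    intro y
    have := hsmul_left (0 : K) 0 y
    simpa using this
  have ht0' : ∀ y : L, t y 0 = 0 := by
    intro y
    have := hsmul_right (0 : K) y 0
    simpa using this
  -- each `t l l` is central: first show it commutes with all generators
  have hcent : ∀ l : L, t l l ∈ LieAlgebra.center K T := by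
    intro l
    -- centralizer of `t l l` as a Lie subalgebra
    let A : LieSubalgebra K T :=
      { carrier := {z : T | ⁅z, t l l⁆ = 0}
        add_mem' := fun {a b} ha hb => by
          simp only [Set.mem_setOf_eq] at *
          rw [add_lie, ha, hb, add_zero]
        zero_mem' := by simp
        smul_mem' := fun c a ha => by
          simp only [Set.mem_setOf_eq] at *
          rw [smul_lie, ha, smul_zero]
        lie_mem' := fun {a b} ha hb => by
          simp only [Set.mem_setOf_eq] at *
          rw [lie_lie, ha, hb]
          simp }
    have hAtop : (⊤ : LieSubalgebra K T) ≤ A := by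
      rw [← hgen]
      apply LieSubalgebra.lieSpan_le.mpr
      rintro w ⟨⟨x, y⟩, rfl⟩
      show ⁅t x y, t l l⁆ = 0
      rw [hrel_brkt]
      have : (⁅l, l⁆ : L) = 0 := lie_self l
      rw [this, ht0', neg_zero]
    rw [LieModule.mem_maxTrivSubmodule]
    intro x
    have hx : x ∈ A := hAtop (LieSubalgebra.mem_top x)
    exact hx
  -- the centre, as a Lie subalgebra
  let C : LieSubalgebra K T :=
    { carrier := {z : T | z ∈ LieAlgebra.center K T}
      add_mem' := fun {a b} ha hb => (LieAlgebra.center K T).add_mem ha hb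
      zero_mem' := (LieAlgebra.center K T).zero_mem
      smul_mem' := fun c a ha => (LieAlgebra.center K T).smul_mem c ha
      lie_mem' := fun {a b} ha hb => by
        simp only [Set.mem_setOf_eq, LieModule.mem_maxTrivSubmodule] at *
        intro x
        rw [hb a]
        simp }
  intro z hz
  have : z ∈ C := by
    refine LieSubalgebra.lieSpan_le.mpr ?_ hz
    rintro w ⟨l, rfl⟩
    exact hcent l
  exact this
end

section
/- Let L be an 8-dimensional Lie algebra over a field with basis x₁, ..., x₈ and nonzero brackets [x₁,x₂] = x₆, [x₁,x₄] = x₈, [x₃,x₅] = x₈, [x₂,x₇] = α₂x₈, [x₄,x₇] = x₈ (all other brackets of basis elements zero), where α₂ = 0. Then L is isomorphic to the direct sum H(1) ⊕ H(2) of Heisenberg Lie algebras of dimensions 3 and 5. -/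
/-- The Lie algebra `H(1) ⊕ H(2)`: carrier `((Fin 2 → K) × K) × ((Fin 4 → K) × K)`,
each factor a Heisenberg Lie algebra with the second coordinate its centre. -/
abbrev H1H2 (K : Type*) : Type _ := ((Fin 2 → K) × K) × ((Fin 4 → K) × K)

namespace H1H2

variable {K : Type*} [Field K]

def w2 (a b : Fin 2 → K) : K := a 0 * b 1 - a 1 * b 0

def w4 (a b : Fin 4 → K) : K := a 0 * b 1 - a 1 * b 0 + (a 2 * b 3 - a 3 * b 2)

/-- The bracket on `H(1) ⊕ H(2)`. -/
def brkt (x y : H1H2 K) : H1H2 K := ((0, w2 x.1.1 y.1.1), (0, w4 x.2.1 y.2.1))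

instance : LieRing (H1H2 K) :=
  { (inferInstance : AddCommGroup (H1H2 K)) with
    bracket := brkt
    add_lie := fun x y z => by
      show brkt (x + y) z = brkt x z + brkt y z
      simp only [brkt, w2, w4, Prod.ext_iff, Prod.fst_add, Prod.snd_add, Prod.mk_add_mk,
        Pi.add_apply, add_zero]
      exact ⟨⟨by simp, by ring⟩, ⟨by simp, by ring⟩⟩
    lie_add := fun x y z => by
      show brkt x (y + z) = brkt x y + brkt x z
      simp only [brkt, w2, w4, Prod.ext_iff, Prod.fst_add, Prod.snd_add, Prod.mk_add_mk,
        Pi.add_apply, add_zero]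
      exact ⟨⟨by simp, by ring⟩, ⟨by simp, by ring⟩⟩
    lie_self := fun x => by
      show brkt x x = 0
      simp only [brkt, w2, w4, Prod.ext_iff, Prod.fst_zero, Prod.snd_zero]
      exact ⟨⟨by simp, by ring⟩, ⟨by simp, by ring⟩⟩
    leibniz_lie := fun x y z => by
      show brkt x (brkt y z) = brkt (brkt x y) z + brkt y (brkt x z)
      simp only [brkt, w2, w4, Prod.ext_iff, Prod.fst_add, Prod.snd_add, Prod.mk_add_mk,
        Pi.zero_apply, add_zero]
      exact ⟨⟨by simp, by ring⟩, ⟨by simp, by ring⟩⟩ }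

instance : LieAlgebra K (H1H2 K) :=
  { (inferInstance : Module K (H1H2 K)) with
    lie_smul := fun a x y => by
      show brkt x (a • y) = a • brkt x y
      simp only [brkt, w2, w4, Prod.ext_iff, Prod.smul_fst, Prod.smul_snd, Prod.smul_mk,
        Pi.smul_apply, smul_eq_mul, smul_zero]
      exact ⟨⟨by simp, by ring⟩, ⟨by simp, by ring⟩⟩ }

end H1H2

/-!
Replace `x₁` by `x₁' = x₁ + x₇`. Then `[x₁', x₄] = x₈ - x₈ = 0`, and since `α₂ = 0` also
`[x₂, x₇] = 0`, so `x₁', x₂, x₆` span a copy of `H(1)` and `x₃, x₅, x₄, x₇, x₈` span a copy of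
`H(2)`, and the two commute. Formally, the linear isomorphism sending `x_i` to its image under this
change of variables is a Lie algebra morphism because the basis of `L` and its image satisfy the
same bracket table.
-/

section LieBasis

variable {ι R L L' : Type*} [CommRing R] [LieRing L] [LieAlgebra R L] [LieRing L']
  [LieAlgebra R L']

theorem LinearMap.map_lie_of_basis (b : Module.Basis ι R L) (φ : L →ₗ[R] L')
    (h : ∀ i j, φ ⁅b i, b j⁆ = ⁅φ (b i), φ (b j)⁆) (x y : L) : φ ⁅x, y⁆ = ⁅φ x, φ y⁆ := by
  have hB : (LieModule.toEnd R L L : L →ₗ[R] Module.End R L).compr₂ φ =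
      (LieModule.toEnd R L' L' : L' →ₗ[R] Module.End R L').compl₁₂ φ φ :=
    LinearMap.ext_basis b b fun i j => by simpa using h i j
  simpa using LinearMap.congr_fun₂ hB x y

def LinearEquiv.toLieEquivOfBasis (e : L ≃ₗ[R] L') (b : Module.Basis ι R L)
    (h : ∀ i j, e ⁅b i, b j⁆ = ⁅e (b i), e (b j)⁆) : L ≃ₗ⁅R⁆ L' :=
  { e with map_lie' := fun {x y} => e.toLinearMap.map_lie_of_basis b h x y }

end LieBasis

def alpha2ZeroSupport : Set (Fin 8 × Fin 8) :=
  {(0,1),(1,0),(0,3),(3,0),(2,4),(4,2),(3,6),(6,3)}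

/-- The bracket table of the statement, with indices shifted: `v k` stands for `x_{k+1}`. -/
structure Alpha2ZeroTable {M : Type*} [LieRing M] (v : Fin 8 → M) : Prop where
  lie_0_1 : ⁅v 0, v 1⁆ = v 5
  lie_0_3 : ⁅v 0, v 3⁆ = v 7
  lie_2_4 : ⁅v 2, v 4⁆ = v 7
  lie_3_6 : ⁅v 3, v 6⁆ = v 7
  lie_eq_zero : ∀ i j : Fin 8, (i, j) ∉ alpha2ZeroSupport → ⁅v i, v j⁆ = 0

theorem Alpha2ZeroTable.map_lie {M N F : Type*} [LieRing M] [LieRing N] [FunLike F M N]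
    [AddMonoidHomClass F M N] {v : Fin 8 → M} (hv : Alpha2ZeroTable v) (φ : F)
    (hφv : Alpha2ZeroTable (φ ∘ v)) (i j : Fin 8) : φ ⁅v i, v j⁆ = ⁅φ (v i), φ (v j)⁆ := by
  by_cases hij : (i, j) ∈ alpha2ZeroSupport
  · have swap {i j : Fin 8} (h : φ ⁅v i, v j⁆ = ⁅φ (v i), φ (v j)⁆) :
        φ ⁅v j, v i⁆ = ⁅φ (v j), φ (v i)⁆ := by
      rw [← lie_skew, map_neg, h, lie_skew]
    have h01 : φ ⁅v 0, v 1⁆ = ⁅φ (v 0), φ (v 1)⁆ := by rw [hv.lie_0_1]; exact hφv.lie_0_1.symm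
    have h03 : φ ⁅v 0, v 3⁆ = ⁅φ (v 0), φ (v 3)⁆ := by rw [hv.lie_0_3]; exact hφv.lie_0_3.symm
    have h24 : φ ⁅v 2, v 4⁆ = ⁅φ (v 2), φ (v 4)⁆ := by rw [hv.lie_2_4]; exact hφv.lie_2_4.symm
    have h36 : φ ⁅v 3, v 6⁆ = ⁅φ (v 3), φ (v 6)⁆ := by rw [hv.lie_3_6]; exact hφv.lie_3_6.symm
    simp only [alpha2ZeroSupport, Set.mem_insert_iff, Set.mem_singleton_iff, Prod.mk.injEq] at hij
    rcases hij with ⟨rfl, rfl⟩ | ⟨rfl, rfl⟩ | ⟨rfl, rfl⟩ | ⟨rfl, rfl⟩ | ⟨rfl, rfl⟩ | ⟨rfl, rfl⟩ |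
      ⟨rfl, rfl⟩ | ⟨rfl, rfl⟩
    exacts [h01, swap h01, h03, swap h03, h24, swap h24, h36, swap h36]
  · rw [hv.lie_eq_zero i j hij, map_zero]
    exact (hφv.lie_eq_zero i j hij).symm

namespace H1H2

variable {K : Type*} [Field K]

@[simp] lemma lie_def (x y : H1H2 K) :
    ⁅x, y⁆ = ((0, w2 x.1.1 y.1.1), (0, w4 x.2.1 y.2.1)) := rfl

/-- The images of `x₁, …, x₈` under the change of variables `x₁' = x₁ + x₇`, where `H(1)` has
basis `e₀, e₁` and centre `z`, and `H(2)` has basis `f₀, f₁, f₂, f₃` and centre `z'`: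
`x₁' ↦ e₀, x₂ ↦ e₁, x₆ ↦ z, x₃ ↦ f₀, x₅ ↦ f₁, x₄ ↦ f₂, x₇ ↦ f₃, x₈ ↦ z'`. -/
def basisImage : Fin 8 → H1H2 K :=
  ![((![1, 0], 0), (![0, 0, 0, -1], 0)),
    ((![0, 1], 0), (0, 0)),
    ((0, 0), (![1, 0, 0, 0], 0)),
    ((0, 0), (![0, 0, 1, 0], 0)),
    ((0, 0), (![0, 1, 0, 0], 0)),
    ((0, 1), (0, 0)),
    ((0, 0), (![0, 0, 0, 1], 0)),
    ((0, 0), (0, 1))]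

theorem alpha2ZeroTable_basisImage : Alpha2ZeroTable (basisImage (K := K)) where
  lie_0_1 := by simp [basisImage, w2, w4]
  lie_0_3 := by simp [basisImage, w2, w4]
  lie_2_4 := by simp [basisImage, w2, w4]
  lie_3_6 := by simp [basisImage, w2, w4]
  lie_eq_zero i j hij := by
    fin_cases i <;> fin_cases j <;> simp_all [alpha2ZeroSupport, basisImage, w2, w4]

variable {L : Type*} [LieRing L] [LieAlgebra K L]

noncomputable def invOfBasis (b : Module.Basis (Fin 8) K L) : H1H2 K →ₗ[K] L where
  toFun p := p.1.1 0 • (b 0 + b 6) + p.1.1 1 • b 1 + p.1.2 • b 5 +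
    p.2.1 0 • b 2 + p.2.1 1 • b 4 + p.2.1 2 • b 3 + p.2.1 3 • b 6 + p.2.2 • b 7
  map_add' p q := by
    simp only [Prod.fst_add, Prod.snd_add, Pi.add_apply, add_smul]
    module
  map_smul' a p := by
    simp only [Prod.smul_fst, Prod.smul_snd, Pi.smul_apply, smul_eq_mul, mul_smul,
      RingHom.id_apply]
    module

theorem invOfBasis_basisImage (b : Module.Basis (Fin 8) K L) (i : Fin 8) :
    invOfBasis b (basisImage i) = b i := by
  fin_cases i <;> simp [invOfBasis, basisImage]

noncomputable def linearEquivOfBasis (b : Module.Basis (Fin 8) K L) : L ≃ₗ[K] H1H2 K :=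
  .ofLinearMap (b.constr K basisImage) (invOfBasis b)
    (LinearMap.ext fun p => by
      simp only [invOfBasis, LinearMap.coe_comp, LinearMap.coe_mk, AddHom.coe_mk,
        Function.comp_apply, map_add, map_smul, Module.Basis.constr_basis]
      simp [basisImage, Prod.ext_iff, funext_iff, Fin.forall_fin_succ])
    (b.ext fun i => by simp [invOfBasis_basisImage])

theorem linearEquivOfBasis_comp_basis (b : Module.Basis (Fin 8) K L) :
    linearEquivOfBasis b ∘ b = basisImage :=
  funext (b.constr_basis K basisImage)

end H1H2

/-- the 8-dimensional Lie algebra with nonzero brackets [x₁,x₂]=x₆, [x₁,x₄]=x₈, [x₃,x₅]=x₈, [x₄,x₇]=x₈ (the case α₂ = 0) is isomorphic to H(1) ⊕ H(2). -/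
theorem stmt_3 (K : Type*) [Field K] (L : Type*) [LieRing L] [LieAlgebra K L]
    (b : Module.Basis (Fin 8) K L)
    (h12 : ⁅b 0, b 1⁆ = b 5)
    (h14 : ⁅b 0, b 3⁆ = b 7)
    (h35 : ⁅b 2, b 4⁆ = b 7)
    (h47 : ⁅b 3, b 6⁆ = b 7)
    (hzero : ∀ i j : Fin 8,
      (i, j) ∉ ({(0,1),(1,0),(0,3),(3,0),(2,4),(4,2),(3,6),(6,3)} : Set (Fin 8 × Fin 8)) → ⁅b i, b j⁆ = 0) :
    Nonempty (L ≃ₗ⁅K⁆ H1H2 K) := by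
  have hb : Alpha2ZeroTable b := ⟨h12, h14, h35, h47, hzero⟩
  have himage : Alpha2ZeroTable (H1H2.linearEquivOfBasis b ∘ b) :=
    H1H2.linearEquivOfBasis_comp_basis b ▸ H1H2.alpha2ZeroTable_basisImage
  exact ⟨(H1H2.linearEquivOfBasis b).toLieEquivOfBasis b (hb.map_lie _ himage)⟩
end

section
/- Let L be the 8-dimensional Lie algebra S₁ with basis x₁, ..., x₈ and nonzero brackets [x₁,x₂] = x₆, [x₁,x₄] = x₈, [x₃,x₅] = x₈, [x₂,x₇] = x₈. Then L is nilpotent of class 2, dim [L,L] = 2, Z(L) = [L,L] is spanned by x₆ and x₈, and L is a stem Lie algebra (i.e., Z(L) ⊆ [L,L]). -/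
/-!
Every bracket of basis vectors lies in `span {x₆, x₈}`, and `x₆ = [x₁, x₂]`, `x₈ = [x₁, x₄]`, so
`[L, L] = span {x₆, x₈}`. Both vectors are central. Conversely, bracketing a central `z` with
`x₁, x₂, x₃, x₅` gives `z₂ x₆ + z₄ x₈`, `-z₁ x₆ + z₇ x₈`, `z₅ x₈` and `-z₃ x₈`, so every coordinate
of `z` other than `z₆, z₈` vanishes. Hence `Z(L) = [L, L]`, and `[L, [L, L]] = [L, Z(L)] = 0`.
-/

open Module

namespace Module.Basis

variable {ι R M : Type*} [CommRing R] [AddCommGroup M] [Module R M]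

theorem linearIndependent_pair (b : Basis ι R M) {i j : ι} (hij : i ≠ j) :
    LinearIndependent R ![b i, b j] := by
  refine LinearIndependent.pair_iff.mpr fun s t hst => ?_
  simpa [Finsupp.single_apply, hij, hij.symm] using
    congrArg (fun x => (b.repr x i, b.repr x j)) hst

theorem finrank_span_pair [Nontrivial R] (b : Basis ι R M) {i j : ι} (hij : i ≠ j) :
    finrank R (Submodule.span R {b i, b j}) = 2 := by
  rw [← Matrix.range_cons_cons_empty, finrank_span_eq_card (b.linearIndependent_pair hij),
    Fintype.card_fin]

end Module.Basis

section LieBasis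

variable {ι R L : Type*} [CommRing R] [LieRing L] [LieAlgebra R L]

theorem Module.Basis.lie_eq_sum [Fintype ι] (b : Basis ι R L) (x z : L) :
    ⁅x, z⁆ = ∑ j, b.repr z j • ⁅x, b j⁆ := by
  have := congrArg (LieModule.toEnd R L L x) (b.sum_repr z)
  rw [map_sum] at this
  simpa only [map_smul, LieModule.toEnd_apply_apply] using this.symm

theorem Module.Basis.lie_mem_of_forall_lie_mem (b : Basis ι R L) {S : Submodule R L}
    (h : ∀ i j, ⁅b i, b j⁆ ∈ S) (x y : L) : ⁅x, y⁆ ∈ S := by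
  induction b.mem_span x using Submodule.span_induction generalizing y with
  | mem _ hx =>
    obtain ⟨i, rfl⟩ := hx
    induction b.mem_span y using Submodule.span_induction with
    | mem _ hy => obtain ⟨j, rfl⟩ := hy; exact h i j
    | zero => simp
    | add _ _ _ _ h₁ h₂ => rw [lie_add]; exact S.add_mem h₁ h₂
    | smul c _ _ h => rw [lie_smul]; exact S.smul_mem c h
  | zero => simp
  | add _ _ _ _ h₁ h₂ => rw [add_lie]; exact S.add_mem (h₁ y) (h₂ y)
  | smul c _ _ h => rw [smul_lie]; exact S.smul_mem c (h y)

theorem LieAlgebra.mem_center_iff_forall_lie_basis (b : Module.Basis ι R L) (z : L) :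
    z ∈ center R L ↔ ∀ i, ⁅b i, z⁆ = 0 := by
  refine ⟨fun hz i => (LieModule.mem_maxTrivSubmodule R L L z).mp hz (b i), fun h => ?_⟩
  have hz : LieModule.toEnd R L L z = 0 :=
    b.ext fun i => by
      rw [LieModule.toEnd_apply_apply, ← lie_skew, h i, neg_zero, LinearMap.zero_apply]
  refine (LieModule.mem_maxTrivSubmodule R L L z).mpr fun x => ?_
  rw [← lie_skew, ← LieModule.toEnd_apply_apply R, hz, LinearMap.zero_apply, neg_zero]

end LieBasis

theorem LieModule.lowerCentralSeries_two_eq_bot_of_le_maxTrivSubmodule {R L M : Type*}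
    [CommRing R] [LieRing L] [LieAlgebra R L] [AddCommGroup M] [Module R M]
    [LieRingModule L M] [LieModule R L M]
    (h : lowerCentralSeries R L M 1 ≤ maxTrivSubmodule R L M) :
    lowerCentralSeries R L M 2 = ⊥ := by
  rw [lowerCentralSeries_succ, eq_bot_iff,
    ← ideal_oper_maxTrivSubmodule_eq_bot R L M ⊤]
  exact LieSubmodule.mono_lie_right ⊤ h

/-- `b` is the basis `x₁, …, x₈` of `S₁`, with `xₖ = b (k - 1)`. -/
structure IsS₁Basis {K L : Type*} [CommRing K] [LieRing L] [LieAlgebra K L]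
    (b : Basis (Fin 8) K L) : Prop where
  lie_zero_one : ⁅b 0, b 1⁆ = b 5
  lie_zero_three : ⁅b 0, b 3⁆ = b 7
  lie_two_four : ⁅b 2, b 4⁆ = b 7
  lie_one_six : ⁅b 1, b 6⁆ = b 7
  lie_eq_zero : ∀ i j : Fin 8,
    (i, j) ∉ ({(0,1),(1,0),(0,3),(3,0),(2,4),(4,2),(1,6),(6,1)} : Set (Fin 8 × Fin 8)) →
      ⁅b i, b j⁆ = 0

namespace IsS₁Basis

open Submodule

variable {K L : Type*} [CommRing K] [LieRing L] [LieAlgebra K L] {b : Basis (Fin 8) K L}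

theorem lie_one_zero (hb : IsS₁Basis b) : ⁅b 1, b 0⁆ = -b 5 := by
  rw [← lie_skew, hb.lie_zero_one]

theorem lie_three_zero (hb : IsS₁Basis b) : ⁅b 3, b 0⁆ = -b 7 := by
  rw [← lie_skew, hb.lie_zero_three]

theorem lie_four_two (hb : IsS₁Basis b) : ⁅b 4, b 2⁆ = -b 7 := by
  rw [← lie_skew, hb.lie_two_four]

theorem lie_six_one (hb : IsS₁Basis b) : ⁅b 6, b 1⁆ = -b 7 := by
  rw [← lie_skew, hb.lie_one_six]

theorem lie_basis_mem_span (hb : IsS₁Basis b) (i j : Fin 8) :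
    ⁅b i, b j⁆ ∈ span K {b 5, b 7} := by
  have h5 : b 5 ∈ span K {b 5, b 7} := subset_span (Set.mem_insert _ _)
  have h7 : b 7 ∈ span K {b 5, b 7} := subset_span (Set.mem_insert_of_mem _ rfl)
  fin_cases i <;> fin_cases j <;>
    simp [hb.lie_zero_one, hb.lie_zero_three, hb.lie_two_four, hb.lie_one_six, hb.lie_one_zero,
      hb.lie_three_zero, hb.lie_four_two, hb.lie_six_one, hb.lie_eq_zero, h5, h7]

theorem lie_zero_left (hb : IsS₁Basis b) (z : L) :
    ⁅b 0, z⁆ = b.repr z 1 • b 5 + b.repr z 3 • b 7 := by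
  rw [b.lie_eq_sum, Fin.sum_univ_eight]
  simp [hb.lie_zero_one, hb.lie_zero_three, hb.lie_eq_zero]

theorem lie_one_left (hb : IsS₁Basis b) (z : L) :
    ⁅b 1, z⁆ = -b.repr z 0 • b 5 + b.repr z 6 • b 7 := by
  rw [b.lie_eq_sum, Fin.sum_univ_eight]
  simp [hb.lie_one_zero, hb.lie_one_six, hb.lie_eq_zero]

theorem lie_two_left (hb : IsS₁Basis b) (z : L) : ⁅b 2, z⁆ = b.repr z 4 • b 7 := by
  rw [b.lie_eq_sum, Fin.sum_univ_eight]
  simp [hb.lie_two_four, hb.lie_eq_zero]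

theorem lie_four_left (hb : IsS₁Basis b) (z : L) : ⁅b 4, z⁆ = -b.repr z 2 • b 7 := by
  rw [b.lie_eq_sum, Fin.sum_univ_eight]
  simp [hb.lie_four_two, hb.lie_eq_zero]

theorem span_le_center (hb : IsS₁Basis b) :
    span K {b 5, b 7} ≤ (LieAlgebra.center K L).toSubmodule := by
  rw [span_le, Set.pair_subset_iff]
  constructor <;>
  · refine (LieAlgebra.mem_center_iff_forall_lie_basis b _).mpr fun i => hb.lie_eq_zero i _ ?_
    fin_cases i <;> simp

theorem center_le_span (hb : IsS₁Basis b) :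
    (LieAlgebra.center K L).toSubmodule ≤ span K {b 5, b 7} := by
  intro z hz
  have hlie (i : Fin 8) : ⁅b i, z⁆ = 0 := (LieAlgebra.mem_center_iff_forall_lie_basis b z).mp hz i
  have h57 := LinearIndependent.pair_iff.mp (b.linearIndependent_pair (by decide : (5 : Fin 8) ≠ 7))
  have h7 := b.linearIndependent.smul_left_injective 7
  obtain ⟨hz1, hz3⟩ := h57 _ _ (hb.lie_zero_left z ▸ hlie 0)
  obtain ⟨hz0, hz6⟩ := h57 _ _ (hb.lie_one_left z ▸ hlie 1)
  have hz4 : b.repr z 4 = 0 := h7 ((hb.lie_two_left z ▸ hlie 2).trans (zero_smul K _).symm)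
  have hz2 : b.repr z 2 = 0 := neg_eq_zero.mp <|
    h7 ((hb.lie_four_left z ▸ hlie 4).trans (zero_smul K _).symm)
  have hz : z = b.repr z 5 • b 5 + b.repr z 7 • b 7 := by
    nth_rw 1 [← b.sum_repr z]
    rw [Fin.sum_univ_eight, neg_eq_zero.mp hz0, hz1, hz2, hz3, hz4, hz6]
    simp only [zero_smul, zero_add, add_zero]
  exact mem_span_pair.mpr ⟨_, _, hz.symm⟩

theorem center_eq_span (hb : IsS₁Basis b) :
    (LieAlgebra.center K L).toSubmodule = span K {b 5, b 7} :=
  le_antisymm hb.center_le_span hb.span_le_center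

theorem lowerCentralSeries_one_eq_center (hb : IsS₁Basis b) :
    LieModule.lowerCentralSeries K L L 1 = LieAlgebra.center K L := by
  refine le_antisymm ?_ ?_
  · rw [LieModule.lowerCentralSeries_succ, LieModule.lowerCentralSeries_zero,
      LieSubmodule.lie_le_iff]
    rintro x - y -
    rw [← LieSubmodule.mem_toSubmodule, hb.center_eq_span]
    exact b.lie_mem_of_forall_lie_mem hb.lie_basis_mem_span x y
  · rw [← LieSubmodule.toSubmodule_le_toSubmodule, hb.center_eq_span, span_le,
      Set.pair_subset_iff, ← hb.lie_zero_one, ← hb.lie_zero_three]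
    exact ⟨LieSubmodule.lie_mem_lie trivial trivial, LieSubmodule.lie_mem_lie trivial trivial⟩

end IsS₁Basis

/-- the Lie algebra S₁ (brackets [x₁,x₂]=x₆, [x₁,x₄]=x₈, [x₃,x₅]=x₈, [x₂,x₇]=x₈) is nilpotent of class 2, has 2-dimensional derived subalgebra, Z(L)=[L,L] spanned by x₆,x₈, and is a stem Lie algebra. -/
theorem stmt_16 (K : Type*) [Field K] (L : Type*) [LieRing L] [LieAlgebra K L]
    (b : Module.Basis (Fin 8) K L)
    (h1 : ⁅b 0, b 1⁆ = b 5)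
    (h2 : ⁅b 0, b 3⁆ = b 7)
    (h3 : ⁅b 2, b 4⁆ = b 7)
    (h4 : ⁅b 1, b 6⁆ = b 7)
    (hzero : ∀ i j : Fin 8,
      (i, j) ∉ ({(0,1),(1,0),(0,3),(3,0),(2,4),(4,2),(1,6),(6,1)} : Set (Fin 8 × Fin 8)) → ⁅b i, b j⁆ = 0) :
    (LieModule.lowerCentralSeries K L L 2 = ⊥ ∧ LieModule.lowerCentralSeries K L L 1 ≠ ⊥) ∧
    Module.finrank K (LieModule.lowerCentralSeries K L L 1).toSubmodule = 2 ∧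
    (LieAlgebra.center K L).toSubmodule = Submodule.span K {b 5, b 7} ∧
    (LieAlgebra.center K L).toSubmodule = (LieModule.lowerCentralSeries K L L 1).toSubmodule ∧
    (LieAlgebra.center K L).toSubmodule ≤ (LieModule.lowerCentralSeries K L L 1).toSubmodule := by
  have hb : IsS₁Basis b := ⟨h1, h2, h3, h4, hzero⟩
  have hlcs := hb.lowerCentralSeries_one_eq_center
  have hne : LieAlgebra.center K L ≠ ⊥ := fun h => b.ne_zero 5 <| by
    simpa [h] using hb.span_le_center (Submodule.subset_span (Set.mem_insert _ _))
  refine ⟨⟨LieModule.lowerCentralSeries_two_eq_bot_of_le_maxTrivSubmodule hlcs.le, hlcs ▸ hne⟩,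
    ?_, hb.center_eq_span, by rw [hlcs], by rw [hlcs]⟩
  rw [hlcs, hb.center_eq_span]
  exact b.finrank_span_pair (by decide)
end
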